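/- Let V be a finite-dimensional real vector space with dim ℙ(V) ≥ 2. Let A, B, C, D be properly convex open subsets of ℙ(V) such that the triples (A, B, C), (A, B, D), and (C, B, D) are all in occultation position. Then: (1) the set Conv(A ∪ B ∪ C ∪ D) is well defined and properly convex; (2) the triple (A, Conv(B ∪ C), D) is in occultation position. -/

import Mathlib

open scoped Pointwise
open Projectivization

namespace ProjectiveCombination

noncomputable section

/-- The quotient topology on a projectivization. -/
instance projizationTopology (K W : Type*) [DivisionRing K] [AddCommGroup W]
    [Module K W] [TopologicalSpace W] : TopologicalSpace (Projectivization K W) :=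
  inferInstanceAs (TopologicalSpace (Quotient (projectivizationSetoid K W)))

variable (V : Type) [NormedAddCommGroup V] [NormedSpace ℝ V]

/-- The general linear group of `V`, as the units of the algebra of continuous endomorphisms. -/
abbrev GLV := (V →L[ℝ] V)ˣ

theorem GLV.inj (g : GLV V) :
    Function.Injective (((g : V →L[ℝ] V) : V →ₗ[ℝ] V)) := by
  intro a b hab
  have hab' : (g : V →L[ℝ] V) a = (g : V →L[ℝ] V) b := by simpa using hab
  have h := congrArg (fun z => ((g⁻¹ : GLV V) : V →L[ℝ] V) z) hab'
  simp only [← ContinuousLinearMap.mul_apply] at h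
  rw [Units.inv_mul] at h
  simpa using h

theorem GLV.ne_zero (g : GLV V) {v : V} (hv : v ≠ 0) : (g : V →L[ℝ] V) v ≠ 0 := by
  intro h0
  apply hv
  have : (((g : V →L[ℝ] V) : V →ₗ[ℝ] V)) v = (((g : V →L[ℝ] V) : V →ₗ[ℝ] V)) 0 := by
    simpa using h0
  simpa using GLV.inj V g this

theorem mk_congr {W : Type*} [AddCommGroup W] [Module ℝ W] {v w : W} (h : v = w) (hv : v ≠ 0) :
    Projectivization.mk ℝ v hv = Projectivization.mk ℝ w (h ▸ hv) := by subst h; rfl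

/-- The action of `GL(V)` on the projective space of `V`. -/
instance : MulAction (GLV V) (Projectivization ℝ V) where
  smul g x := Projectivization.map (((g : V →L[ℝ] V) : V →ₗ[ℝ] V)) (GLV.inj V g) x
  one_smul x := by
    induction x using Projectivization.ind with
    | h v hv =>
      show Projectivization.map _ _ _ = _
      rw [Projectivization.map_mk]
      exact mk_congr (by simp) hv |>.symm |>.symm
  mul_smul g h x := by
    induction x using Projectivization.ind with
    | h v hv =>
      show Projectivization.map _ _ _ = Projectivization.map _ _ (Projectivization.map _ _ _)
      rw [Projectivization.map_mk, Projectivization.map_mk, Projectivization.map_mk]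
      exact mk_congr (by simp) _

theorem glv_smul_mk (g : GLV V) (v : V) (hv : v ≠ 0) :
    g • Projectivization.mk ℝ v hv
      = Projectivization.mk ℝ ((g : V →L[ℝ] V) v) (GLV.ne_zero V g hv) := rfl

/-- The subgroup of scalar multiples of the identity inside `GL(V)`. -/
def projScalars : Subgroup (GLV V) :=
  MonoidHom.range (Units.map (algebraMap ℝ (V →L[ℝ] V)).toMonoidHom)

instance : (projScalars V).Normal := by
  constructor
  rintro x ⟨r, rfl⟩ g
  refine ⟨r, Units.ext ?_⟩
  show (algebraMap ℝ (V →L[ℝ] V)) (r : ℝ)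
      = ((g : V →L[ℝ] V)) * (algebraMap ℝ (V →L[ℝ] V)) (r : ℝ) * ((g⁻¹ : GLV V) : V →L[ℝ] V)
  rw [← Algebra.commutes ((r : ℝ)) ((g : V →L[ℝ] V)), mul_assoc, Units.mul_inv, mul_one]

/-- The projective general linear group of `V`: the quotient of `GL(V)` by scalars. -/
abbrev PGL := GLV V ⧸ projScalars V

theorem scalars_act_trivially :
    ∀ x ∈ projScalars V, (MulAction.toPermHom (GLV V) (Projectivization ℝ V)) x = 1 := by
  rintro x ⟨r, rfl⟩
  ext p
  induction p using Projectivization.ind with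
  | h v hv =>
    show (Units.map (algebraMap ℝ (V →L[ℝ] V)).toMonoidHom r) • Projectivization.mk ℝ v hv
      = Projectivization.mk ℝ v hv
    rw [glv_smul_mk]
    rw [Projectivization.mk_eq_mk_iff]
    refine ⟨r, ?_⟩
    simp [Algebra.algebraMap_eq_smul_one, Units.smul_def]

/-- The action of `PGL(V)` on the projective space of `V`, via permutations. -/
def PGLperm : PGL V →* Equiv.Perm (Projectivization ℝ V) :=
  QuotientGroup.lift (projScalars V) (MulAction.toPermHom (GLV V) (Projectivization ℝ V))
    (scalars_act_trivially V)

/-- The action of `PGL(V)` on the projective space of `V`. -/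
instance : MulAction (PGL V) (Projectivization ℝ V) :=
  MulAction.compHom _ (PGLperm V)

variable {V}

/-- The canonical lift of a point of projective space into the affine chart determined by a
linear functional `f` (the chart being the complement of the projective hyperplane `ker f`):
the unique lift `v` with `f v = 1`, when the point lies in the chart. -/
def chartLift (f : V →L[ℝ] ℝ) (x : Projectivization ℝ V) : V := (f x.rep)⁻¹ • x.rep

/-- A subset of projective space is contained in the affine chart determined by `f`. -/
def InChart (f : V →L[ℝ] ℝ) (S : Set (Projectivization ℝ V)) : Prop :=
  ∀ x ∈ S, f x.rep ≠ 0

/-- A subset of projective space is *convex* if it is contained and convex in some affine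
chart. -/
def IsConvexSet (S : Set (Projectivization ℝ V)) : Prop :=
  ∃ f : V →L[ℝ] ℝ, InChart f S ∧ Convex ℝ (chartLift f '' S)

/-- A subset of projective space is *properly convex* if it is contained, convex and bounded
in some affine chart. -/
def IsProperlyConvex (S : Set (Projectivization ℝ V)) : Prop :=
  ∃ f : V →L[ℝ] ℝ, InChart f S ∧ Convex ℝ (chartLift f '' S) ∧
    Bornology.IsBounded (chartLift f '' S)

/-- The convex hull of a subset of projective space: the intersection of all convex subsets
containing it.  For a connected set contained in an affine chart this agrees with the convex
hull taken in any affine chart containing the set. -/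
def projHull (X : Set (Projectivization ℝ V)) : Set (Projectivization ℝ V) :=
  ⋂₀ {C | IsConvexSet C ∧ X ⊆ C}

/-- The convex hull of `X` taken within the ambient set `S`. -/
def hullWithin (S X : Set (Projectivization ℝ V)) : Set (Projectivization ℝ V) :=
  ⋂₀ {C | IsConvexSet C ∧ X ⊆ C ∧ C ⊆ S}

/-- The projective hyperplane of `ℙ(V)` corresponding to a point of `ℙ(V*)`. -/
def hypl (φ : Projectivization ℝ (V →L[ℝ] ℝ)) : Set (Projectivization ℝ V) :=
  {x | φ.rep x.rep = 0}

/-- The dual of a subset `S` of `ℙ(V)`: the set of projective hyperplanes missing the closure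
of `S`, viewed as a subset of `ℙ(V*)`. -/
def dualSet (S : Set (Projectivization ℝ V)) : Set (Projectivization ℝ (V →L[ℝ] ℝ)) :=
  {φ | hypl φ ∩ closure S = ∅}

/-- The intersection of all projective hyperplanes of `ℙ(V)` disjoint from `𝕆`
(denoted `→𝕆` in the paper). -/
def dirSpace (𝕆 : Set (Projectivization ℝ V)) : Set (Projectivization ℝ V) :=
  ⋂₀ {H | ∃ φ : Projectivization ℝ (V →L[ℝ] ℝ), H = hypl φ ∧ hypl φ ∩ 𝕆 = ∅}

/-- The convex open subset `𝒪 × U'` of `ℙ(V)` obtained from a properly convex subset `𝒪`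
of `ℙ(U)` (for a decomposition `V = U ⊕ U'`): the projectivization of the set of sums
`u + u'` where `u` spans a line of `𝒪` and `u' ∈ U'`. -/
def fatten (𝒪 : Set (Projectivization ℝ V)) (U' : Submodule ℝ V) :
    Set (Projectivization ℝ V) :=
  {x | ∃ (u u' : V) (hu : u ≠ 0) (huu : u + u' ≠ 0),
    u' ∈ U' ∧ Projectivization.mk ℝ u hu ∈ 𝒪 ∧ x = Projectivization.mk ℝ (u + u') huu}

/-- A triple `(A, B, C)` of (properly convex open) subsets of `ℙ(V)` is in *occultation
position*. -/
def IsOccultation (A B C : Set (Projectivization ℝ V)) : Prop :=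
  (¬ A ⊆ B ∧ ¬ C ⊆ B) ∧ ((A ∩ B).Nonempty ∧ (B ∩ C).Nonempty ∧ A ∩ C = ∅) ∧
    closure (dualSet B) ⊆ dualSet A ∪ dualSet C

/-- A triple `(A, B, C)` of (properly convex open) subsets of `ℙ(V)` is in *weak occultation
position*. -/
def IsWeakOccultation (A B C : Set (Projectivization ℝ V)) : Prop :=
  (¬ A ⊆ B ∧ ¬ C ⊆ B) ∧ ((A ∩ B).Nonempty ∧ (B ∩ C).Nonempty ∧ A ∩ C = ∅) ∧
    dualSet B ⊆ dualSet A ∪ dualSet C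

/-- A nontrivial projective segment in `ℙ(V)`: the image in projective space of a segment
between two linearly independent vectors. -/
def IsProjSegment (s : Set (Projectivization ℝ V)) : Prop :=
  ∃ v w : V, LinearIndependent ℝ ![v, w] ∧
    s = {x | ∃ p ∈ segment ℝ v w, ∃ hp : p ≠ 0, x = Projectivization.mk ℝ p hp}

/-- `C` has strictly convex nonideal boundary in `Ω`: every nontrivial projective segment
contained in `closure C \ interior C` is contained in `∂Ω`. -/
def StrictlyConvexNonidealBoundaryIn (C Ω : Set (Projectivization ℝ V)) : Prop :=
  ∀ s, IsProjSegment s → s ⊆ closure C \ interior C → s ⊆ frontier Ω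

/-- The image in `ℙ(V)` of a linear subspace of `V`. -/
def projSub (W : Submodule ℝ V) : Set (Projectivization ℝ V) := {x | x.rep ∈ W}

section GroupNotions

variable {G : Type} [Group G] [MulAction G (Projectivization ℝ V)]

/-- A subgroup preserves a subset of projective space. -/
def SetPreserved (Γ : Subgroup G) (S : Set (Projectivization ℝ V)) : Prop :=
  ∀ γ ∈ Γ, γ • S = S

/-- The orbit of a point under a subgroup. -/
def orbitSet (Γ : Subgroup G) (x : Projectivization ℝ V) : Set (Projectivization ℝ V) :=
  {y | ∃ γ ∈ Γ, γ • x = y}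

/-- The full orbital limit set of `Γ` in `Ω`: all accumulation points in `∂Ω` of
`Γ`-orbits of points of `Ω`. -/
def limitSet (Γ : Subgroup G) (Ω : Set (Projectivization ℝ V)) : Set (Projectivization ℝ V) :=
  {z | z ∈ closure Ω \ Ω ∧ ∃ x ∈ Ω, z ∈ closure (orbitSet Γ x)}

/-- The convex core of `Γ` in `Ω`: the intersection of `Ω` with the convex hull of the
closure of the full orbital limit set, taken in the closure of `Ω`. -/
def convexCore (Γ : Subgroup G) (Ω : Set (Projectivization ℝ V)) : Set (Projectivization ℝ V) :=
  Ω ∩ hullWithin (closure Ω) (closure (limitSet Γ Ω))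

/-- A set has compact quotient by a subgroup: some compact set has translates covering it. -/
def CompactQuot (Γ : Subgroup G) (C : Set (Projectivization ℝ V)) : Prop :=
  ∃ K : Set (Projectivization ℝ V), IsCompact K ∧ C ⊆ ⋃ γ ∈ Γ, γ • K

/-- A set has compact quotient by a group acting through a representation. -/
def CompactQuotRep {Γ : Type} [Group Γ] (ρ : Γ →* G) (C : Set (Projectivization ℝ V)) : Prop :=
  ∃ K : Set (Projectivization ℝ V), IsCompact K ∧ C ⊆ ⋃ γ : Γ, ρ γ • K

/-- The action of `Γ` on `Ω` is naively convex cocompact: `Γ` preserves and acts with compact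
quotient on some nonempty closed (in `Ω`) convex subset of `Ω`. -/
def ActsNaivelyConvexCocompactlyOn (Γ : Subgroup G) (Ω : Set (Projectivization ℝ V)) : Prop :=
  ∃ C : Set (Projectivization ℝ V), C.Nonempty ∧ C ⊆ Ω ∧ closure C ∩ Ω ⊆ C ∧
    IsConvexSet C ∧ SetPreserved Γ C ∧ CompactQuot Γ C

/-- The action of `Γ` on `Ω` is convex cocompact: moreover the cocompact convex set can be
taken with closure containing the full orbital limit set. -/
def ActsConvexCocompactlyOn (Γ : Subgroup G) (Ω : Set (Projectivization ℝ V)) : Prop :=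
  ∃ C : Set (Projectivization ℝ V), C.Nonempty ∧ C ⊆ Ω ∧ closure C ∩ Ω ⊆ C ∧
    IsConvexSet C ∧ SetPreserved Γ C ∧ CompactQuot Γ C ∧ limitSet Γ Ω ⊆ closure C

variable (V) in
/-- `Γ` is naively convex cocompact in `ℙ(V)`. -/
def NaivelyConvexCocompactIn (Γ : Subgroup G) : Prop :=
  ∃ Ω : Set (Projectivization ℝ V), Ω.Nonempty ∧ IsOpen Ω ∧ IsProperlyConvex Ω ∧
    SetPreserved Γ Ω ∧ ActsNaivelyConvexCocompactlyOn Γ Ω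

variable (V) in
/-- `Γ` is convex cocompact in `ℙ(V)`. -/
def ConvexCocompactIn (Γ : Subgroup G) : Prop :=
  ∃ Ω : Set (Projectivization ℝ V), Ω.Nonempty ∧ IsOpen Ω ∧ IsProperlyConvex Ω ∧
    SetPreserved Γ Ω ∧ ActsConvexCocompactlyOn Γ Ω

/-- The action of `Γ` on `S` is properly discontinuous. -/
def ProperlyDiscontinuousOn (Γ : Subgroup G) (S : Set (Projectivization ℝ V)) : Prop :=
  ∀ K ⊆ S, IsCompact K → {γ : Γ | (((γ : G) • K) ∩ K).Nonempty}.Finite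

/-- `Γ` divides `S`: it preserves `S` and acts properly discontinuously and cocompactly
on `S`. -/
def Divides (Γ : Subgroup G) (S : Set (Projectivization ℝ V)) : Prop :=
  SetPreserved Γ S ∧ ProperlyDiscontinuousOn Γ S ∧ CompactQuot Γ S

end GroupNotions

/-- A representation into `PGL(V)` is discrete and faithful. -/
def DiscreteFaithful {Γ : Type} [Group Γ] (ρ : Γ →* PGL V) : Prop :=
  Function.Injective ρ ∧ DiscreteTopology ↥(MonoidHom.range ρ)

section Amalgam

variable {G : Type} [Group G] (Γ₀ Γ₁ Δ : Subgroup G)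

/-- The two factors of an amalgamated free product, indexed by `Bool`. -/
abbrev ampFam : Bool → Type := fun b => ↥(cond b Γ₁ Γ₀)

/-- The inclusions of the common subgroup `Δ` into the two factors. -/
def ampHoms (h₀ : Δ ≤ Γ₀) (h₁ : Δ ≤ Γ₁) : ∀ b, ↥Δ →* ampFam Γ₀ Γ₁ b := fun b =>
  Subgroup.inclusion (by
    cases b
    · exact h₀
    · exact h₁)

/-- The amalgamated free product `Γ₀ *_Δ Γ₁`, as the pushout of the inclusions
`Δ ↪ Γ₀` and `Δ ↪ Γ₁`. -/
abbrev AmalgamatedProduct (h₀ : Δ ≤ Γ₀) (h₁ : Δ ≤ Γ₁) : Type :=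
  Monoid.PushoutI (ampHoms Γ₀ Γ₁ Δ h₀ h₁)

/-- The representation of the amalgamated free product `Γ₀ *_Δ Γ₁` induced by the
inclusions `Γ₀, Γ₁ ↪ G`. -/
def amalgamRep (h₀ : Δ ≤ Γ₀) (h₁ : Δ ≤ Γ₁) : AmalgamatedProduct Γ₀ Γ₁ Δ h₀ h₁ →* G :=
  Monoid.PushoutI.lift (fun b => (cond b Γ₁ Γ₀).subtype) Δ.subtype
    (by
      intro b
      cases b
      · exact MonoidHom.ext fun x => rfl
      · exact MonoidHom.ext fun x => rfl)

/-- The representation of the free product `Γ₀ * Γ₁` induced by the inclusions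
`Γ₀, Γ₁ ↪ G`. -/
def freeProdRep : Monoid.Coprod ↥Γ₀ ↥Γ₁ →* G := Monoid.Coprod.lift Γ₀.subtype Γ₁.subtype

end Amalgam

end


noncomputable section AuxTop
set_option linter.unusedSectionVars false
open Set
variable {W : Type} [NormedAddCommGroup W] [NormedSpace ℝ W]

lemma continuous_pmk : Continuous (Projectivization.mk' ℝ : {v : W // v ≠ 0} → Projectivization ℝ W) :=
  continuous_quotient_mk'

lemma pmk_eq (v : {v : W // v ≠ 0}) : Projectivization.mk' ℝ v = Projectivization.mk ℝ v.1 v.2 := rfl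

lemma isOpenMap_pmk : IsOpenMap (Projectivization.mk' ℝ : {v : W // v ≠ 0} → Projectivization ℝ W) := by
  intro U hU
  have hsat : (Projectivization.mk' ℝ) ⁻¹' ((Projectivization.mk' ℝ) '' U)
      = ⋃ c : ℝˣ, (fun v : {v : W // v ≠ 0} => (⟨(c : ℝ) • v.1, by
          simp [smul_ne_zero_iff, v.2, c.ne_zero]⟩ : {v : W // v ≠ 0})) ⁻¹' U := by
    ext v
    simp only [mem_preimage, mem_image, mem_iUnion]
    constructor
    · rintro ⟨u, hu, huv⟩
      obtain ⟨c, hc⟩ := (Projectivization.mk_eq_mk_iff ℝ _ _ v.2 u.2).1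
        (by rw [← pmk_eq, ← pmk_eq, huv])
      have hc' : (c : ℝ) • (u : W) = (v : W) := by rw [← hc]; rfl
      refine ⟨c⁻¹, ?_⟩
      have h2 : ((c⁻¹ : ℝˣ) : ℝ) • (v : W) = (u : W) := by
        rw [← hc', smul_smul]; simp
      convert hu using 1
      exact Subtype.ext h2
    · rintro ⟨c, hc⟩
      refine ⟨_, hc, ?_⟩
      rw [pmk_eq, pmk_eq, Projectivization.mk_eq_mk_iff]
      exact ⟨c, rfl⟩
  have : IsOpen ((Projectivization.mk' ℝ) ⁻¹' ((Projectivization.mk' ℝ) '' U)) := by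
    rw [hsat]
    refine isOpen_iUnion fun c => hU.preimage ?_
    exact (continuous_subtype_val.const_smul ((c : ℝ))).subtype_mk _
  exact this

lemma surjective_pmk : Function.Surjective (Projectivization.mk' ℝ : {v : W // v ≠ 0} → Projectivization ℝ W) := by
  intro x
  exact ⟨⟨x.rep, x.rep_nonzero⟩, by rw [pmk_eq]; exact x.mk_rep⟩

lemma isQuotientMap_pmk : Topology.IsQuotientMap (Projectivization.mk' ℝ : {v : W // v ≠ 0} → Projectivization ℝ W) :=
  isOpenMap_pmk.isQuotientMap continuous_pmk surjective_pmk

variable [FiniteDimensional ℝ W]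

lemma exists_dual_pair {v w : W} (hv : v ≠ 0) (hdep : ∀ c : ℝ, c • v ≠ w) :
    ∃ φ ψ : W →L[ℝ] ℝ, φ v = 1 ∧ φ w = 0 ∧ ψ v = 0 ∧ ψ w = 1 := by
  have key : ∀ a b : W, a ∉ (Submodule.span ℝ {b} : Submodule ℝ W) →
      ∃ φ : W →L[ℝ] ℝ, φ a = 1 ∧ φ b = 0 := by
    intro a b hab
    have hclosed : IsClosed ((Submodule.span ℝ {b} : Submodule ℝ W) : Set W) :=
      (Submodule.span ℝ {b}).closed_of_finiteDimensional
    obtain ⟨f, u, hfa, hfb⟩ := geometric_hahn_banach_point_closed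
      (Submodule.span ℝ {b}).convex hclosed hab
    have hb0 : f b = 0 := by
      by_contra h0
      -- f (t • b) = t * f b can be made arbitrarily small
      have h1 := hfb (((u-1) / f b) • b) (Submodule.smul_mem _ _ (Submodule.mem_span_singleton_self b))
      rw [map_smul] at h1
      simp only [smul_eq_mul] at h1
      rw [div_mul_cancel₀ _ h0] at h1
      linarith
    have hu0 : u < 0 := by
      have := hfb 0 (Submodule.zero_mem _)
      simpa using this
    have hfa0 : f a ≠ 0 := by intro h; rw [h] at hfa; linarith
    refine ⟨(f a)⁻¹ • f, ?_, ?_⟩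
    · simp [inv_mul_cancel₀ hfa0]
    · simp [hb0]
  have h1 : v ∉ (Submodule.span ℝ {w} : Submodule ℝ W) := by
    intro h
    obtain ⟨c, hc⟩ := Submodule.mem_span_singleton.1 h
    rcases eq_or_ne c 0 with rfl | hc0
    · simp at hc; exact hv hc.symm
    · exact hdep c⁻¹ (by rw [← hc, smul_smul, inv_mul_cancel₀ hc0, one_smul])
  have h2 : w ∉ (Submodule.span ℝ {v} : Submodule ℝ W) := by
    intro h
    obtain ⟨c, hc⟩ := Submodule.mem_span_singleton.1 h
    exact hdep c hc
  obtain ⟨φ, hφ1, hφ2⟩ := key v w h1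
  obtain ⟨ψ, hψ1, hψ2⟩ := key w v h2
  exact ⟨φ, ψ, hφ1, hφ2, hψ2, hψ1⟩

instance : CompactSpace (Projectivization ℝ W) := by
  refine ⟨?_⟩
  have : Set.univ (α := Projectivization ℝ W) =
      (fun v : Metric.sphere (0 : W) 1 => Projectivization.mk' ℝ
        ⟨v.1, ne_zero_of_mem_unit_sphere v⟩) '' Set.univ := by
    refine (Set.eq_univ_of_forall ?_).symm
    intro x
    have hx := x.rep_nonzero
    have hnorm : ‖(‖x.rep‖⁻¹ • x.rep : W)‖ = 1 := by
      rw [norm_smul]; simp [norm_ne_zero_iff.2 hx]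
    refine ⟨⟨‖x.rep‖⁻¹ • x.rep, by simp [hnorm]⟩, Set.mem_univ _, ?_⟩
    dsimp only
    rw [pmk_eq]
    have : Projectivization.mk ℝ (‖x.rep‖⁻¹ • x.rep) (by rw [← norm_ne_zero_iff, hnorm]; norm_num)
        = Projectivization.mk ℝ x.rep x.rep_nonzero := by
      rw [Projectivization.mk_eq_mk_iff']
      exact ⟨‖x.rep‖⁻¹, rfl⟩
    rw [this, Projectivization.mk_rep]
  rw [this]
  exact (isCompact_univ).image (continuous_pmk.comp (continuous_subtype_val.subtype_mk _))

instance : T2Space (Projectivization ℝ W) := by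
  rw [t2_iff_isClosed_diagonal]
  have hq : Topology.IsQuotientMap (Prod.map (Projectivization.mk' ℝ) (Projectivization.mk' ℝ) :
      {v : W // v ≠ 0} × {v : W // v ≠ 0} → Projectivization ℝ W × Projectivization ℝ W) :=
    (isOpenMap_pmk.prodMap isOpenMap_pmk).isQuotientMap
      (continuous_pmk.prodMap continuous_pmk) (surjective_pmk.prodMap surjective_pmk)
  rw [← hq.isClosed_preimage]
  have : (Prod.map (Projectivization.mk' ℝ) (Projectivization.mk' ℝ)) ⁻¹'
      (Set.diagonal (Projectivization ℝ W)) =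
      ⋂ (φ : W →L[ℝ] ℝ) (ψ : W →L[ℝ] ℝ),
        {p : {v : W // v ≠ 0} × {v : W // v ≠ 0} | φ p.1.1 * ψ p.2.1 = φ p.2.1 * ψ p.1.1} := by
    ext ⟨v, w⟩
    simp only [Set.mem_preimage, Set.mem_diagonal_iff, Set.mem_iInter, Set.mem_setOf_eq, Prod.map]
    constructor
    · intro h φ ψ
      rw [pmk_eq, pmk_eq, Projectivization.mk_eq_mk_iff'] at h
      obtain ⟨a, ha⟩ := h
      rw [← ha]
      simp only [map_smul, smul_eq_mul]
      ring
    · intro h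
      rw [pmk_eq, pmk_eq, Projectivization.mk_eq_mk_iff']
      by_contra hems
      push_neg at hems
      have hdep : ∀ c : ℝ, c • (w : W) ≠ (v : W) := fun c hc => hems c hc
      obtain ⟨φ, ψ, h1, h2, h3, h4⟩ := exists_dual_pair w.2 (fun c hc => hems c hc)
      have := h φ ψ
      rw [h2, h1, h3, h4] at this
      simp at this
  rw [this]
  refine isClosed_iInter fun φ => isClosed_iInter fun ψ => isClosed_eq ?_ ?_
  · exact ((φ.continuous.comp (continuous_subtype_val.comp continuous_fst)).mul
      (ψ.continuous.comp (continuous_subtype_val.comp continuous_snd)))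
  · exact ((φ.continuous.comp (continuous_subtype_val.comp continuous_snd)).mul
      (ψ.continuous.comp (continuous_subtype_val.comp continuous_fst)))


lemma rep_mk {v : W} (hv : v ≠ 0) : ∃ a : ℝˣ, (Projectivization.mk ℝ v hv).rep = (a : ℝ) • v := by
  obtain ⟨a, ha⟩ := Projectivization.exists_smul_eq_mk_rep ℝ v hv
  exact ⟨a, by rw [← ha]; rfl⟩

lemma f_rep_ne_zero_iff (f : W →L[ℝ] ℝ) {v : W} (hv : v ≠ 0) :
    f (Projectivization.mk ℝ v hv).rep ≠ 0 ↔ f v ≠ 0 := by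
  obtain ⟨a, ha⟩ := rep_mk hv
  rw [ha, map_smul]
  simp [Units.ne_zero a]

lemma chartLift_mk (f : W →L[ℝ] ℝ) {v : W} (hv : v ≠ 0) (hfv : f v ≠ 0) :
    chartLift f (Projectivization.mk ℝ v hv) = (f v)⁻¹ • v := by
  obtain ⟨a, ha⟩ := rep_mk hv
  unfold chartLift
  rw [ha, map_smul]
  simp only [smul_eq_mul, smul_smul]
  congr 1
  rw [mul_inv]
  field_simp

lemma f_chartLift (f : W →L[ℝ] ℝ) {x : Projectivization ℝ W} (hx : f x.rep ≠ 0) :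
    f (chartLift f x) = 1 := by
  unfold chartLift
  rw [map_smul]
  simp [inv_mul_cancel₀ hx]

lemma chartLift_ne_zero (f : W →L[ℝ] ℝ) {x : Projectivization ℝ W} (hx : f x.rep ≠ 0) :
    chartLift f x ≠ 0 := by
  intro h
  have := f_chartLift f hx
  rw [h] at this
  simp at this

lemma mk_chartLift (f : W →L[ℝ] ℝ) {x : Projectivization ℝ W} (hx : f x.rep ≠ 0) :
    Projectivization.mk ℝ (chartLift f x) (chartLift_ne_zero f hx) = x := by
  unfold chartLift at *
  have h1 : Projectivization.mk ℝ ((f x.rep)⁻¹ • x.rep)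
      (by intro h; apply chartLift_ne_zero f hx; unfold chartLift; exact h)
      = Projectivization.mk ℝ x.rep x.rep_nonzero := by
    rw [Projectivization.mk_eq_mk_iff']
    exact ⟨(f x.rep)⁻¹, rfl⟩
  rw [h1, Projectivization.mk_rep]

lemma rep_eq_smul_chartLift (f : W →L[ℝ] ℝ) {x : Projectivization ℝ W} (hx : f x.rep ≠ 0) :
    x.rep = (f x.rep) • chartLift f x := by
  unfold chartLift
  rw [smul_smul, mul_inv_cancel₀ hx, one_smul]

lemma isOpen_chart (f : W →L[ℝ] ℝ) : IsOpen {x : Projectivization ℝ W | f x.rep ≠ 0} := by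
  rw [← isQuotientMap_pmk.isOpen_preimage]
  have : (Projectivization.mk' ℝ) ⁻¹' {x : Projectivization ℝ W | f x.rep ≠ 0}
      = {v : {v : W // v ≠ 0} | f v.1 ≠ 0} := by
    ext v
    simp only [Set.mem_preimage, Set.mem_setOf_eq, pmk_eq]
    exact f_rep_ne_zero_iff f v.2
  rw [this]
  exact isOpen_compl_iff.mpr (IsClosed.preimage (f.continuous.comp continuous_subtype_val)
    isClosed_singleton) |>.mono le_rfl |>.mono le_rfl

lemma continuousOn_chartLift (f : W →L[ℝ] ℝ) :
    ContinuousOn (chartLift f) {x : Projectivization ℝ W | f x.rep ≠ 0} := by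
  rw [continuousOn_iff']
  intro O hO
  have hopen : IsOpen {v : {v : W // v ≠ 0} | f v.1 ≠ 0} :=
    isOpen_compl_iff.mpr (IsClosed.preimage (f.continuous.comp continuous_subtype_val)
      isClosed_singleton)
  have hcont : ContinuousOn (fun v : {v : W // v ≠ 0} => (f v.1)⁻¹ • v.1)
      {v : {v : W // v ≠ 0} | f v.1 ≠ 0} := by
    refine ContinuousOn.smul ?_ continuous_subtype_val.continuousOn
    exact ContinuousOn.inv₀ (f.continuous.comp continuous_subtype_val).continuousOn
      (fun x hx => hx)
  refine ⟨Projectivization.mk' ℝ '' ({v : {v : W // v ≠ 0} | f v.1 ≠ 0}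
      ∩ (fun v : {v : W // v ≠ 0} => (f v.1)⁻¹ • v.1) ⁻¹' O), isOpenMap_pmk _ ?_, ?_⟩
  · exact hcont.isOpen_inter_preimage hopen hO
  · ext x
    simp only [Set.mem_inter_iff, Set.mem_preimage, Set.mem_setOf_eq, Set.mem_image]
    constructor
    · rintro ⟨hxO, hx⟩
      refine ⟨⟨⟨x.rep, x.rep_nonzero⟩, ⟨hx, ?_⟩, by rw [pmk_eq, Projectivization.mk_rep]⟩, hx⟩
      show (f x.rep)⁻¹ • x.rep ∈ O
      exact hxO
    · rintro ⟨⟨v, ⟨hv, hvO⟩, hvx⟩, hx⟩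
      refine ⟨?_, hx⟩
      show chartLift f x ∈ O
      have : x = Projectivization.mk ℝ v.1 v.2 := by rw [← pmk_eq, hvx]
      rw [this, chartLift_mk f v.2 hv]
      exact hvO



/-- Image in projective space of a set of vectors. -/
def mkim (T : Set W) : Set (Projectivization ℝ W) :=
  Projectivization.mk' ℝ '' (Subtype.val ⁻¹' T)

lemma mem_mkim {T : Set W} {x : Projectivization ℝ W} :
    x ∈ mkim T ↔ ∃ (v : W) (h : v ≠ 0), v ∈ T ∧ x = Projectivization.mk ℝ v h := by
  unfold mkim
  constructor
  · rintro ⟨v, hv, rfl⟩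
    exact ⟨v.1, v.2, hv, by rw [pmk_eq]⟩
  · rintro ⟨v, h, hvT, rfl⟩
    exact ⟨⟨v, h⟩, hvT, rfl⟩

lemma mkim_eq_self {f : W →L[ℝ] ℝ} {S : Set (Projectivization ℝ W)} (hS : InChart f S) :
    mkim (chartLift f '' S) = S := by
  ext x
  rw [mem_mkim]
  constructor
  · rintro ⟨v, h, ⟨y, hy, rfl⟩, rfl⟩
    rw [mk_chartLift f (hS y hy)]
    exact hy
  · intro hx
    refine ⟨chartLift f x, chartLift_ne_zero f (hS x hx), ⟨x, hx, rfl⟩, ?_⟩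
    rw [mk_chartLift f (hS x hx)]

lemma isCompact_mkim {T : Set W} (hT : IsCompact T) (h0 : (0 : W) ∉ T) :
    IsCompact (mkim T) := by
  apply IsCompact.image _ continuous_pmk
  rw [Subtype.isCompact_iff]
  have : Subtype.val '' (Subtype.val ⁻¹' T : Set {v : W // v ≠ 0}) = T := by
    ext v
    constructor
    · rintro ⟨u, hu, rfl⟩; exact hu
    · intro hv; exact ⟨⟨v, fun h => h0 (h ▸ hv)⟩, hv, rfl⟩
  rw [this]
  exact hT

lemma mkim_closure_subset {T : Set W} (h0 : (0 : W) ∉ closure T) :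
    mkim (closure T) ⊆ closure (mkim T) := by
  rintro x hx
  rw [mem_mkim] at hx
  obtain ⟨v, hv, hvT, rfl⟩ := hx
  have himg : Subtype.val '' (Subtype.val ⁻¹' T : Set {v : W // v ≠ 0}) = T := by
    ext u
    constructor
    · rintro ⟨w, hw, rfl⟩; exact hw
    · intro hu; exact ⟨⟨u, fun h => h0 (subset_closure (h ▸ hu))⟩, hu, rfl⟩
  have hcl : (⟨v, hv⟩ : {v : W // v ≠ 0}) ∈ closure (Subtype.val ⁻¹' T : Set {v : W // v ≠ 0}) := by
    rw [Topology.IsEmbedding.subtypeVal.closure_eq_preimage_closure_image, himg]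
    exact hvT
  have himc := image_closure_subset_closure_image
    (f := (Projectivization.mk' ℝ : {v : W // v ≠ 0} → Projectivization ℝ W))
    (s := (Subtype.val ⁻¹' T : Set {v : W // v ≠ 0})) continuous_pmk
  exact himc ⟨⟨v, hv⟩, hcl, rfl⟩

section PC
variable {f : W →L[ℝ] ℝ} {S : Set (Projectivization ℝ W)}
  (hS : InChart f S) (hb : Bornology.IsBounded (chartLift f '' S))

include hS

lemma lift_subset_slice : chartLift f '' S ⊆ {v : W | f v = 1} := by
  rintro v ⟨x, hx, rfl⟩
  exact f_chartLift f (hS x hx)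

lemma zero_not_mem_closure_lift : (0 : W) ∉ closure (chartLift f '' S) := by
  intro h
  have h1 : closure (chartLift f '' S) ⊆ {v : W | f v = 1} :=
    closure_minimal (lift_subset_slice hS) (isClosed_eq f.continuous continuous_const)
  have := h1 h
  simp at this

include hb

lemma isCompact_closure_lift [FiniteDimensional ℝ W] :
    IsCompact (closure (chartLift f '' S)) :=
  hb.isCompact_closure

lemma closure_pc [FiniteDimensional ℝ W] :
    closure S = mkim (closure (chartLift f '' S)) := by
  apply Set.Subset.antisymm
  · apply closure_minimal
    · conv_lhs => rw [← mkim_eq_self hS]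
      exact fun x hx => mem_mkim.2 (by
        obtain ⟨v, h, hvT, rfl⟩ := mem_mkim.1 hx
        exact ⟨v, h, subset_closure hvT, rfl⟩)
    · exact (isCompact_mkim (isCompact_closure_lift hS hb)
        (zero_not_mem_closure_lift hS)).isClosed
  · have := mkim_closure_subset (T := chartLift f '' S) (zero_not_mem_closure_lift hS)
    rw [mkim_eq_self hS] at this
    exact this

lemma closure_pc_chart [FiniteDimensional ℝ W] :
    ∀ x ∈ closure S, f x.rep ≠ 0 := by
  intro x hx
  rw [closure_pc hS hb, mem_mkim] at hx
  obtain ⟨v, h, hvT, rfl⟩ := hx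
  have hfv : f v = 1 := closure_minimal (lift_subset_slice hS)
    (isClosed_eq f.continuous continuous_const) hvT
  rw [f_rep_ne_zero_iff f h, hfv]
  exact one_ne_zero

lemma lift_closure_pc [FiniteDimensional ℝ W] :
    chartLift f '' (closure S) = closure (chartLift f '' S) := by
  apply Set.Subset.antisymm
  · rintro v ⟨x, hx, rfl⟩
    rw [closure_pc hS hb, mem_mkim] at hx
    obtain ⟨w, h, hwT, rfl⟩ := hx
    have hfw : f w = 1 := closure_minimal (lift_subset_slice hS)
      (isClosed_eq f.continuous continuous_const) hwT
    rw [chartLift_mk f h (by rw [hfw]; exact one_ne_zero), hfw]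
    simpa using hwT
  · intro v hv
    have h0 : v ≠ 0 := fun h => zero_not_mem_closure_lift hS (h ▸ hv)
    have hfv : f v = 1 := closure_minimal (lift_subset_slice hS)
      (isClosed_eq f.continuous continuous_const) hv
    have hx : Projectivization.mk ℝ v h0 ∈ closure S := by
      rw [closure_pc hS hb, mem_mkim]
      exact ⟨v, h0, hv, rfl⟩
    refine ⟨Projectivization.mk ℝ v h0, hx, ?_⟩
    rw [chartLift_mk f h0 (by rw [hfv]; exact one_ne_zero), hfv]
    simp

end PC

lemma pc_preconnected {f : W →L[ℝ] ℝ} {S : Set (Projectivization ℝ W)}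
    (hS : InChart f S) (hc : Convex ℝ (chartLift f '' S)) : IsPreconnected S := by
  have : S = (fun v : {v : W // v ≠ 0} => Projectivization.mk' ℝ v) '' (Subtype.val ⁻¹' (chartLift f '' S)) := by
    conv_lhs => rw [← mkim_eq_self hS]
    rfl
  rw [this]
  apply IsPreconnected.image _ _ continuous_pmk.continuousOn
  have h2 : IsPreconnected (Subtype.val '' (Subtype.val ⁻¹' (chartLift f '' S) : Set {v : W // v ≠ 0})) := by
    have himg : Subtype.val '' (Subtype.val ⁻¹' (chartLift f '' S) : Set {v : W // v ≠ 0})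
        = chartLift f '' S := by
      ext u
      constructor
      · rintro ⟨w, hw, rfl⟩; exact hw
      · rintro ⟨x, hx, rfl⟩
        exact ⟨⟨_, chartLift_ne_zero f (hS x hx)⟩, ⟨x, hx, rfl⟩, rfl⟩
    rw [himg]
    exact hc.isPreconnected
  exact Topology.IsInducing.subtypeVal.isPreconnected_image.1 h2

lemma sign_const {S : Set (Projectivization ℝ W)} (hconn : IsPreconnected S)
    (f g : W →L[ℝ] ℝ) (hf : ∀ x ∈ S, f x.rep ≠ 0) (hg : ∀ x ∈ S, g x.rep ≠ 0)
    {x y : Projectivization ℝ W} (hx : x ∈ S) (hy : y ∈ S) :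
    0 < g (chartLift f x) * g (chartLift f y) := by
  set F : Projectivization ℝ W → ℝ := fun z => g (chartLift f z) with hF
  have hcont : ContinuousOn F S :=
    g.continuous.comp_continuousOn ((continuousOn_chartLift f).mono hf)
  have hne : ∀ z ∈ S, F z ≠ 0 := by
    intro z hz
    have heq : F z = (f z.rep)⁻¹ * g z.rep := by
      show g (chartLift f z) = _
      unfold chartLift
      rw [map_smul, smul_eq_mul]
    rw [heq]
    exact mul_ne_zero (inv_ne_zero (hf z hz)) (hg z hz)
  rcases lt_trichotomy (F x * F y) 0 with h | h | h
  · exfalso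
    rcases lt_or_gt_of_ne (hne x hx) with hx0 | hx0
    · have hy0 : 0 < F y := by nlinarith [hne y hy]
      have := hconn.intermediate_value hx hy hcont
      have h0 : (0 : ℝ) ∈ Set.Icc (F x) (F y) := ⟨le_of_lt hx0, le_of_lt hy0⟩
      obtain ⟨z, hz, hz0⟩ := this h0
      exact hne z hz hz0
    · have hy0 : F y < 0 := by nlinarith
      have := hconn.intermediate_value hy hx hcont
      have h0 : (0 : ℝ) ∈ Set.Icc (F y) (F x) := ⟨le_of_lt hy0, le_of_lt hx0⟩
      obtain ⟨z, hz, hz0⟩ := this h0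
      exact hne z hz hz0
  · exfalso
    rcases mul_eq_zero.1 h with h | h
    · exact hne x hx h
    · exact hne y hy h
  · exact h


lemma mem_dualSet {S : Set (Projectivization ℝ W)} {φ : Projectivization ℝ (W →L[ℝ] ℝ)} :
    φ ∈ dualSet S ↔ ∀ x ∈ closure S, φ.rep x.rep ≠ 0 := by
  unfold dualSet hypl
  rw [Set.mem_setOf_eq, Set.eq_empty_iff_forall_notMem]
  constructor
  · intro h x hx h0
    exact h x ⟨h0, hx⟩
  · rintro h x ⟨h0, hx⟩
    exact h x hx h0

lemma mem_dualSet_mk {g : W →L[ℝ] ℝ} (hg : g ≠ 0) {S : Set (Projectivization ℝ W)} :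
    Projectivization.mk ℝ g hg ∈ dualSet S ↔ ∀ x ∈ closure S, g x.rep ≠ 0 := by
  rw [mem_dualSet]
  obtain ⟨a, ha⟩ := rep_mk hg
  constructor <;> intro h x hx
  · intro h0
    apply h x hx
    rw [ha, ContinuousLinearMap.smul_apply, h0, smul_zero]
  · have := h x hx
    rw [ha, ContinuousLinearMap.smul_apply]
    simp only [smul_eq_mul]
    exact mul_ne_zero (Units.ne_zero a) this

variable [FiniteDimensional ℝ W]

lemma isOpen_dualSet (S : Set (Projectivization ℝ W)) : IsOpen (dualSet S) := by
  classical
  set Z : Set (Projectivization ℝ (W →L[ℝ] ℝ) × Projectivization ℝ W) :=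
    {p | p.1.rep p.2.rep = 0} with hZ
  have hq : Topology.IsQuotientMap (Prod.map (Projectivization.mk' ℝ) (Projectivization.mk' ℝ) :
      {g : W →L[ℝ] ℝ // g ≠ 0} × {v : W // v ≠ 0} →
        Projectivization ℝ (W →L[ℝ] ℝ) × Projectivization ℝ W) :=
    (isOpenMap_pmk.prodMap isOpenMap_pmk).isQuotientMap
      (continuous_pmk.prodMap continuous_pmk) (surjective_pmk.prodMap surjective_pmk)
  have hZc : IsClosed Z := by
    rw [← hq.isClosed_preimage]
    have hpre : (Prod.map (Projectivization.mk' ℝ) (Projectivization.mk' ℝ)) ⁻¹' Z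
        = {p : {g : W →L[ℝ] ℝ // g ≠ 0} × {v : W // v ≠ 0} | p.1.1 p.2.1 = 0} := by
      ext ⟨g, v⟩
      simp only [Set.mem_preimage, Set.mem_setOf_eq, Prod.map, hZ]
      obtain ⟨a, ha⟩ := rep_mk g.2
      obtain ⟨b, hb⟩ := rep_mk v.2
      rw [pmk_eq, pmk_eq, ha, hb, ContinuousLinearMap.smul_apply, map_smul]
      simp only [smul_eq_mul]
      constructor
      · intro h
        have := mul_eq_zero.1 h
        rcases this with h' | h'
        · exact absurd h' (Units.ne_zero a)
        · rcases mul_eq_zero.1 h' with h'' | h''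
          · exact absurd h'' (Units.ne_zero b)
          · exact h''
      · intro h
        rw [h, mul_zero, mul_zero]
    rw [hpre]
    apply isClosed_eq _ continuous_const
    exact isBoundedBilinearMap_apply.continuous.comp
      ((continuous_subtype_val.comp continuous_fst).prodMk
        (continuous_subtype_val.comp continuous_snd))
  have hds : dualSet S = (Prod.fst '' (Z ∩ (Set.univ ×ˢ closure S)))ᶜ := by
    ext φ
    rw [mem_dualSet, Set.mem_compl_iff]
    constructor
    · intro h hmem
      obtain ⟨⟨ψ, x⟩, ⟨hZm, ⟨_, hxS⟩⟩, rfl⟩ := hmem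
      exact h x hxS hZm
    · intro h x hx h0
      exact h ⟨⟨φ, x⟩, ⟨h0, ⟨Set.mem_univ _, hx⟩⟩, rfl⟩
  rw [hds]
  have hcpt : IsCompact (Z ∩ (Set.univ ×ˢ closure S)) :=
    (hZc.inter (isClosed_univ.prod isClosed_closure)).isCompact
  exact (hcpt.image continuous_fst).isClosed.isOpen_compl


lemma separating_hyperplane {f : W →L[ℝ] ℝ} {B : Set (Projectivization ℝ W)}
    (hB : InChart f B) (hconv : Convex ℝ (chartLift f '' B))
    (hb : Bornology.IsBounded (chartLift f '' B)) (hne : B.Nonempty)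
    {x : Projectivization ℝ W} (hx : x ∉ closure B) :
    ∃ φ ∈ dualSet B, φ.rep x.rep = 0 := by
  set K := closure (chartLift f '' B) with hK
  have hKslice : ∀ v ∈ K, f v = 1 := fun v hv => closure_minimal (lift_subset_slice hB)
    (isClosed_eq f.continuous continuous_const) hv
  obtain ⟨b₀, hb₀⟩ := hne
  have hKne : (chartLift f b₀ : W) ∈ K := subset_closure ⟨b₀, hb₀, rfl⟩
  by_cases hfx : f x.rep = 0
  · have hf0 : f ≠ 0 := by
      intro h
      have := hKslice _ hKne
      rw [h] at this
      simp at this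
    refine ⟨Projectivization.mk ℝ f hf0, ?_, ?_⟩
    · rw [mem_dualSet_mk hf0]
      exact closure_pc_chart hB hb
    · obtain ⟨a, ha⟩ := rep_mk hf0
      rw [ha, ContinuousLinearMap.smul_apply, hfx, smul_zero]
  · set xb := chartLift f x with hxb
    have hxmk : Projectivization.mk ℝ xb (chartLift_ne_zero f hfx) = x := mk_chartLift f hfx
    have hxbK : xb ∉ K := by
      intro h
      apply hx
      rw [closure_pc hB hb, mem_mkim]
      exact ⟨xb, chartLift_ne_zero f hfx, h, hxmk.symm⟩
    obtain ⟨h, u, hhx, hhK⟩ := geometric_hahn_banach_point_closed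
      hconv.closure isClosed_closure hxbK
    set g := h - (h xb) • f with hg
    have hgK : ∀ v ∈ K, 0 < g v := by
      intro v hv
      have h1 : u < h v := hhK v hv
      have h2 : g v = h v - h xb := by
        rw [hg]
        simp [hKslice v hv]
      rw [h2]
      linarith
    have hg0 : g ≠ 0 := by
      intro h0
      have := hgK _ hKne
      rw [h0] at this
      simp at this
    have hgx : g x.rep = 0 := by
      have hrep : x.rep = (f x.rep) • xb := rep_eq_smul_chartLift f hfx
      rw [hg]
      simp only [ContinuousLinearMap.sub_apply, ContinuousLinearMap.smul_apply, smul_eq_mul]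
      rw [hrep, map_smul, map_smul]
      have hfxb : f xb = 1 := f_chartLift f hfx
      simp only [smul_eq_mul, hfxb, mul_one]
      ring
    refine ⟨Projectivization.mk ℝ g hg0, ?_, ?_⟩
    · rw [mem_dualSet_mk hg0]
      intro y hy
      rw [closure_pc hB hb, mem_mkim] at hy
      obtain ⟨v, hv, hvK, rfl⟩ := hy
      obtain ⟨a, ha⟩ := rep_mk hv
      rw [ha, map_smul]
      simp only [smul_eq_mul]
      exact mul_ne_zero (Units.ne_zero a) (ne_of_gt (hgK v hvK))
    · obtain ⟨a, ha⟩ := rep_mk hg0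
      rw [ha, ContinuousLinearMap.smul_apply, hgx, smul_zero]


lemma dual_normalize {f : W →L[ℝ] ℝ} {B : Set (Projectivization ℝ W)}
    (hB : InChart f B) (hconv : Convex ℝ (chartLift f '' B))
    (hb : Bornology.IsBounded (chartLift f '' B)) {x₀ : Projectivization ℝ W} (hx₀ : x₀ ∈ B)
    {φ : Projectivization ℝ (W →L[ℝ] ℝ)} (hφ : φ ∈ dualSet B) :
    ∃ (F : W →L[ℝ] ℝ) (hF : F ≠ 0), Projectivization.mk ℝ F hF = φ ∧
      ∀ x ∈ closure B, 0 < F (chartLift f x) := by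
  have hclconn : IsPreconnected (closure B) := (pc_preconnected hB hconv).closure
  have hclch : ∀ x ∈ closure B, f x.rep ≠ 0 := closure_pc_chart hB hb
  have hφrep : ∀ x ∈ closure B, φ.rep x.rep ≠ 0 := mem_dualSet.1 hφ
  have hx₀c : x₀ ∈ closure B := subset_closure hx₀
  set s := φ.rep (chartLift f x₀) with hs
  have hs0 : s ≠ 0 := by
    rw [hs]
    unfold chartLift
    rw [map_smul, smul_eq_mul]
    exact mul_ne_zero (inv_ne_zero (hclch _ hx₀c)) (hφrep _ hx₀c)
  refine ⟨s⁻¹ • φ.rep, ?_, ?_, ?_⟩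
  · intro h
    have : (s⁻¹ • φ.rep) (chartLift f x₀) = s⁻¹ * s := by
      rw [ContinuousLinearMap.smul_apply, smul_eq_mul, hs]
    rw [h] at this
    simp only [ContinuousLinearMap.zero_apply] at this
    rw [inv_mul_cancel₀ hs0] at this
    exact one_ne_zero this.symm
  · have : Projectivization.mk ℝ (s⁻¹ • φ.rep) (by
        intro h
        have : (s⁻¹ • φ.rep) (chartLift f x₀) = s⁻¹ * s := by
          rw [ContinuousLinearMap.smul_apply, smul_eq_mul, hs]
        rw [h] at this
        simp only [ContinuousLinearMap.zero_apply] at this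
        rw [inv_mul_cancel₀ hs0] at this
        exact one_ne_zero this.symm)
        = Projectivization.mk ℝ φ.rep φ.rep_nonzero := by
      rw [Projectivization.mk_eq_mk_iff']
      exact ⟨s⁻¹, rfl⟩
    rw [this, Projectivization.mk_rep]
  · intro x hx
    have hsgn := sign_const hclconn f φ.rep hclch hφrep hx₀c hx
    rw [ContinuousLinearMap.smul_apply, smul_eq_mul]
    rw [← hs] at hsgn
    have heq : s⁻¹ * φ.rep (chartLift f x) = (s⁻¹ * s⁻¹) * (s * φ.rep (chartLift f x)) := by
      field_simp
    rw [heq]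
    apply mul_pos
    · exact mul_self_pos.2 (inv_ne_zero hs0)
    · exact hsgn

lemma dualSet_preconnected {f : W →L[ℝ] ℝ} {B : Set (Projectivization ℝ W)}
    (hB : InChart f B) (hconv : Convex ℝ (chartLift f '' B))
    (hb : Bornology.IsBounded (chartLift f '' B)) (hne : B.Nonempty) :
    IsPreconnected (dualSet B) := by
  rcases (dualSet B).eq_empty_or_nonempty with h | ⟨φ₀, hφ₀⟩
  · rw [h]; exact isPreconnected_empty
  · obtain ⟨x₀, hx₀⟩ := hne
    have hclch : ∀ x ∈ closure B, f x.rep ≠ 0 := closure_pc_chart hB hb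
    have key : ∀ ψ ∈ dualSet B, JoinedIn (dualSet B) φ₀ ψ := by
      intro ψ hψ
      obtain ⟨F, hF, hFmk, hFpos⟩ := dual_normalize hB hconv hb hx₀ hφ₀
      obtain ⟨G, hG, hGmk, hGpos⟩ := dual_normalize hB hconv hb hx₀ hψ
      have hcomb : ∀ t : ℝ, t ∈ Set.Icc (0:ℝ) 1 → ∀ x ∈ closure B,
          0 < ((1 - t) • F + t • G) (chartLift f x) := by
        intro t ht x hx
        rw [ContinuousLinearMap.add_apply, ContinuousLinearMap.smul_apply,
          ContinuousLinearMap.smul_apply, smul_eq_mul, smul_eq_mul]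
        rcases eq_or_lt_of_le ht.1 with h0 | h0
        · rw [← h0]; simpa using hFpos x hx
        rcases eq_or_lt_of_le ht.2 with h1 | h1
        · rw [h1]; simpa using hGpos x hx
        have := hFpos x hx
        have := hGpos x hx
        nlinarith
      have hcombne : ∀ t : ℝ, t ∈ Set.Icc (0:ℝ) 1 → ((1 - t) • F + t • G) ≠ 0 := by
        intro t ht h0
        have := hcomb t ht x₀ (subset_closure hx₀)
        rw [h0] at this
        simp at this
      have hmem : ∀ t : unitInterval,
          Projectivization.mk' ℝ ⟨(1 - (t:ℝ)) • F + (t:ℝ) • G, hcombne t t.2⟩ ∈ dualSet B := by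
        intro t
        rw [pmk_eq, mem_dualSet_mk]
        intro x hx
        have hrep : x.rep = (f x.rep) • chartLift f x := rep_eq_smul_chartLift f (hclch x hx)
        rw [hrep, map_smul, smul_eq_mul]
        exact mul_ne_zero (hclch x hx) (ne_of_gt (hcomb (t:ℝ) t.2 x hx))
      refine ⟨⟨⟨fun t => Projectivization.mk' ℝ ⟨(1 - (t:ℝ)) • F + (t:ℝ) • G, hcombne t t.2⟩, ?_⟩, ?_, ?_⟩, fun t => hmem t⟩
      · apply continuous_pmk.comp
        apply Continuous.subtype_mk
        exact ((continuous_const.sub continuous_subtype_val).smul continuous_const).add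
          (continuous_subtype_val.smul continuous_const)
      · show Projectivization.mk' ℝ _ = φ₀
        rw [pmk_eq]
        rw [← hFmk]
        apply mk_congr
        norm_num
      · show Projectivization.mk' ℝ _ = ψ
        rw [pmk_eq]
        rw [← hGmk]
        apply mk_congr
        norm_num
    have : IsPathConnected (dualSet B) := ⟨φ₀, hφ₀, fun _ hy => key _ hy⟩
    exact this.isConnected.isPreconnected


/-- The open convex cone over a subset of an affine chart. -/
def coneOf (f : W →L[ℝ] ℝ) (E : Set (Projectivization ℝ W)) : Set W :=
  {v : W | ∃ h : v ≠ 0, 0 < f v ∧ Projectivization.mk ℝ v h ∈ E}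

lemma isOpen_coneOf (f : W →L[ℝ] ℝ) {E : Set (Projectivization ℝ W)} (hE : IsOpen E) :
    IsOpen (coneOf f E) := by
  have heq : coneOf f E = (Subtype.val '' ((Projectivization.mk' ℝ) ⁻¹'
      E : Set {v : W // v ≠ 0})) ∩ f ⁻¹' (Set.Ioi 0) := by
    ext v
    constructor
    · rintro ⟨h, hf, hm⟩
      exact ⟨⟨⟨v, h⟩, by rw [Set.mem_preimage, pmk_eq]; exact hm, rfl⟩, hf⟩
    · rintro ⟨⟨u, hu, rfl⟩, hf⟩
      rw [Set.mem_preimage, pmk_eq] at hu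
      exact ⟨u.2, hf, hu⟩
  rw [heq]
  apply IsOpen.inter _ (IsOpen.preimage f.continuous isOpen_Ioi)
  have : IsOpen {v : W | v ≠ 0} :=
    isOpen_compl_iff.mpr isClosed_singleton
  exact this.isOpenMap_subtype_val _ (hE.preimage continuous_pmk)

lemma smul_mem_coneOf {f : W →L[ℝ] ℝ} {C : Set (Projectivization ℝ W)} (hC : InChart f C)
    {t : ℝ} (ht : 0 < t) {w : W} (hw : w ∈ chartLift f '' C) : t • w ∈ coneOf f C := by
  obtain ⟨c, hc, rfl⟩ := hw
  have hfc : f (chartLift f c) = 1 := f_chartLift f (hC c hc)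
  have hne : t • chartLift f c ≠ 0 := by
    intro h
    have : f (t • chartLift f c) = 0 := by rw [h, map_zero]
    rw [map_smul, smul_eq_mul, hfc, mul_one] at this
    exact ne_of_gt ht this
  refine ⟨hne, by rw [map_smul, smul_eq_mul, hfc, mul_one]; exact ht, ?_⟩
  have : Projectivization.mk ℝ (t • chartLift f c) hne
      = Projectivization.mk ℝ (chartLift f c) (chartLift_ne_zero f (hC c hc)) := by
    rw [Projectivization.mk_eq_mk_iff']
    exact ⟨t, rfl⟩
  rw [this, mk_chartLift f (hC c hc)]
  exact hc

lemma convex_coneOf {f : W →L[ℝ] ℝ} {C : Set (Projectivization ℝ W)}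
    (hC : InChart f C) (hconv : Convex ℝ (chartLift f '' C)) :
    Convex ℝ (coneOf f C) := by
  rintro v₁ ⟨h₁, hf₁, hm₁⟩ v₂ ⟨h₂, hf₂, hm₂⟩ a b ha hb hab
  set w₁ := chartLift f (Projectivization.mk ℝ v₁ h₁) with hw₁
  set w₂ := chartLift f (Projectivization.mk ℝ v₂ h₂) with hw₂
  have hfr₁ : f (Projectivization.mk ℝ v₁ h₁).rep ≠ 0 := (f_rep_ne_zero_iff f h₁).2 (ne_of_gt hf₁)
  have hfr₂ : f (Projectivization.mk ℝ v₂ h₂).rep ≠ 0 := (f_rep_ne_zero_iff f h₂).2 (ne_of_gt hf₂)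
  have hw₁m : w₁ ∈ chartLift f '' C := ⟨_, hm₁, rfl⟩
  have hw₂m : w₂ ∈ chartLift f '' C := ⟨_, hm₂, rfl⟩
  have hv₁ : v₁ = (f v₁) • w₁ := by
    rw [hw₁, chartLift_mk f h₁ (ne_of_gt hf₁), smul_smul, mul_inv_cancel₀ (ne_of_gt hf₁), one_smul]
  have hv₂ : v₂ = (f v₂) • w₂ := by
    rw [hw₂, chartLift_mk f h₂ (ne_of_gt hf₂), smul_smul, mul_inv_cancel₀ (ne_of_gt hf₂), one_smul]
  set T := a * f v₁ + b * f v₂ with hT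
  have hT0 : 0 < T := by
    rcases lt_or_eq_of_le ha with ha' | ha'
    · have : 0 ≤ b * f v₂ := mul_nonneg hb (le_of_lt hf₂)
      nlinarith
    · have hb1 : b = 1 := by rw [← ha'] at hab; linarith
      have : T = f v₂ := by rw [hT, ← ha', hb1]; ring
      rw [this]
      exact hf₂
  set w := (a * f v₁ / T) • w₁ + (b * f v₂ / T) • w₂ with hw
  have hwm : w ∈ chartLift f '' C := by
    apply hconv hw₁m hw₂m
    · exact div_nonneg (mul_nonneg ha (le_of_lt hf₁)) (le_of_lt hT0)
    · exact div_nonneg (mul_nonneg hb (le_of_lt hf₂)) (le_of_lt hT0)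
    · rw [← add_div, ← hT, div_self (ne_of_gt hT0)]
  have hu : a • v₁ + b • v₂ = T • w := by
    have hT0' : T ≠ 0 := ne_of_gt hT0
    have e1 : T * (a * f v₁ / T) = a * f v₁ := by field_simp
    have e2 : T * (b * f v₂ / T) = b * f v₂ := by field_simp
    conv_lhs => rw [hv₁, hv₂]
    rw [hw, smul_add, smul_smul, smul_smul, smul_smul, smul_smul, e1, e2]
  rw [hu]
  exact smul_mem_coneOf hC hT0 hwm

lemma open_subset_of_subset_closure {f : W →L[ℝ] ℝ} {C O : Set (Projectivization ℝ W)}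
    (hC : InChart f C) (hconv : Convex ℝ (chartLift f '' C))
    (hb : Bornology.IsBounded (chartLift f '' C)) (hCo : IsOpen C) (hCne : C.Nonempty)
    (hO : IsOpen O) (hsub : O ⊆ closure C) : O ⊆ C := by
  intro x hxO
  have hxcl : x ∈ closure C := hsub hxO
  have hfx : f x.rep ≠ 0 := closure_pc_chart hC hb x hxcl
  set av := chartLift f x with hav
  have hfav : f av = 1 := f_chartLift f hfx
  have hmkav : Projectivization.mk ℝ av (chartLift_ne_zero f hfx) = x := mk_chartLift f hfx
  -- the cone over C and its closure
  set CC := coneOf f C with hCC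
  have hCCo : IsOpen CC := isOpen_coneOf f hCo
  have hCCc : Convex ℝ CC := convex_coneOf hC hconv
  -- av is in the interior of the closure of CC
  have hint : av ∈ interior (closure CC) := by
    rw [mem_interior]
    refine ⟨coneOf f O, ?_, isOpen_coneOf f hO, ⟨chartLift_ne_zero f hfx, by rw [hfav]; norm_num,
      by rw [hmkav]; exact hxO⟩⟩
    rintro v ⟨h, hf, hm⟩
    have hmcl : Projectivization.mk ℝ v h ∈ closure C := hsub hm
    have hfrep : f (Projectivization.mk ℝ v h).rep ≠ 0 := (f_rep_ne_zero_iff f h).2 (ne_of_gt hf)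
    set w := chartLift f (Projectivization.mk ℝ v h) with hwd
    have hwcl : w ∈ closure (chartLift f '' C) := by
      rw [← lift_closure_pc hC hb]
      exact ⟨_, hmcl, rfl⟩
    have hv : v = (f v) • w := by
      rw [hwd, chartLift_mk f h (ne_of_gt hf), smul_smul, mul_inv_cancel₀ (ne_of_gt hf), one_smul]
    have hsm : (f v) • w ∈ (fun u => (f v) • u) '' closure (chartLift f '' C) := ⟨w, hwcl, rfl⟩
    have hsub2 : (fun u => (f v) • u) '' closure (chartLift f '' C)
        ⊆ closure ((fun u => (f v) • u) '' (chartLift f '' C)) :=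
      image_closure_subset_closure_image (continuous_const_smul _)
    have hsub3 : (fun u => (f v) • u) '' (chartLift f '' C) ⊆ CC := by
      rintro u ⟨w', hw', rfl⟩
      exact smul_mem_coneOf hC hf hw'
    rw [hv]
    exact closure_mono hsub3 (hsub2 hsm)
  -- pick a base point of the cone
  obtain ⟨c₀, hc₀⟩ := hCne
  have hfc₀ : f c₀.rep ≠ 0 := hC c₀ hc₀
  set y₀ := chartLift f c₀ with hy₀
  have hy₀CC : y₀ ∈ CC := by
    have : y₀ = (1 : ℝ) • y₀ := (one_smul ℝ y₀).symm
    rw [this]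
    exact smul_mem_coneOf hC one_pos ⟨c₀, hc₀, rfl⟩
  by_cases hone : av = y₀
  · have h1 : x = Projectivization.mk ℝ av (chartLift_ne_zero f hfx) := hmkav.symm
    rw [h1]
    have h2 : Projectivization.mk ℝ av (chartLift_ne_zero f hfx)
        = Projectivization.mk ℝ (chartLift f c₀) (chartLift_ne_zero f hfc₀) :=
      mk_congr (by rw [hone, hy₀]) _
    rw [h2, mk_chartLift f hfc₀]
    exact hc₀
  -- find a ball around av inside the closure of CC
  obtain ⟨r, hr, hball⟩ := Metric.mem_nhds_iff.1 (mem_interior_iff_mem_nhds.1 hint)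
  set ε := r / (2 * ‖av - y₀‖) with hε
  have hny : (0:ℝ) < ‖av - y₀‖ := by
    rw [norm_pos_iff, sub_ne_zero]
    exact hone
  have hε0 : 0 < ε := div_pos hr (by positivity)
  set z := av + ε • (av - y₀) with hz
  have hzcl : z ∈ closure CC := by
    apply hball
    rw [Metric.mem_ball, dist_eq_norm, hz]
    have : av + ε • (av - y₀) - av = ε • (av - y₀) := by abel
    rw [this, norm_smul, Real.norm_eq_abs, abs_of_pos hε0, hε]
    rw [div_mul_eq_mul_div, mul_comm]
    rw [div_lt_iff₀ (by positivity)]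
    nlinarith
  have hseg : av ∈ openSegment ℝ y₀ z := by
    refine ⟨ε / (1 + ε), 1 / (1 + ε), by positivity, by positivity, ?_, ?_⟩
    · field_simp
      ring
    · rw [hz]
      rw [smul_add, smul_smul]
      have h1ε : (1 : ℝ) + ε ≠ 0 := by positivity
      rw [smul_sub]
      match_scalars <;> field_simp <;> ring
  have havCC : av ∈ CC := by
    have := hCCc.openSegment_interior_closure_subset_interior
      (by rw [hCCo.interior_eq]; exact hy₀CC) hzcl hseg
    rw [hCCo.interior_eq] at this
    exact this
  obtain ⟨h, hf, hm⟩ := havCC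
  rw [hmkav] at hm
  exact hm


lemma comb_mem {g : W →L[ℝ] ℝ} {C' : Set (Projectivization ℝ W)}
    (hg : InChart g C') (hgc : Convex ℝ (chartLift g '' C'))
    {x y : Projectivization ℝ W} (hx : x ∈ C') (hy : y ∈ C')
    {p q : W} (hp : p ≠ 0) (hq : q ≠ 0) (hmp : Projectivization.mk ℝ p hp = x)
    (hmq : Projectivization.mk ℝ q hq = y) (hsgn : 0 < g p * g q)
    {a b : ℝ} (ha : 0 ≤ a) (hb : 0 ≤ b) (hab : a + b = 1) (hu : a • p + b • q ≠ 0) :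
    Projectivization.mk ℝ (a • p + b • q) hu ∈ C' := by
  have hα0 : g p ≠ 0 := fun h => by rw [h, zero_mul] at hsgn; exact lt_irrefl 0 hsgn
  have hβ0 : g q ≠ 0 := fun h => by rw [h, mul_zero] at hsgn; exact lt_irrefl 0 hsgn
  rcases eq_or_lt_of_le ha with h0 | h0
  · have hb1 : b = 1 := by linarith
    have hu' : a • p + b • q = q := by rw [← h0, hb1]; simp
    exact ((mk_congr hu' hu).trans hmq) ▸ hy
  rcases eq_or_lt_of_le hb with h1 | h1
  · have ha1 : a = 1 := by linarith
    have hu' : a • p + b • q = p := by rw [← h1, ha1]; simp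
    exact ((mk_congr hu' hu).trans hmp) ▸ hx
  set α := g p with hαd
  set β := g q with hβd
  set δ := a * α + b * β with hδdef
  have hkey : δ ≠ 0 ∧ 0 ≤ a * α / δ ∧ 0 ≤ b * β / δ := by
    rcases lt_or_gt_of_ne hα0 with hα | hα
    · have hβ : β < 0 := by nlinarith
      have hδ : δ < 0 := by nlinarith
      exact ⟨ne_of_lt hδ, div_nonneg_iff.2 (Or.inr ⟨by nlinarith, le_of_lt hδ⟩),
        div_nonneg_iff.2 (Or.inr ⟨by nlinarith, le_of_lt hδ⟩)⟩
    · have hβ : 0 < β := by nlinarith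
      have hδ : 0 < δ := by nlinarith
      exact ⟨ne_of_gt hδ, div_nonneg (by nlinarith) (le_of_lt hδ),
        div_nonneg (by nlinarith) (le_of_lt hδ)⟩
  obtain ⟨hδ, hs0, ht0⟩ := hkey
  have hsum : a * α / δ + b * β / δ = 1 := by
    rw [← add_div, ← hδdef, div_self hδ]
  have hw₁ : chartLift g x = α⁻¹ • p := by rw [← hmp, chartLift_mk g hp hα0]
  have hw₂ : chartLift g y = β⁻¹ • q := by rw [← hmq, chartLift_mk g hq hβ0]
  obtain ⟨z, hz, hwz⟩ := hgc (Set.mem_image_of_mem _ hx) (Set.mem_image_of_mem _ hy) hs0 ht0 hsum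
  have hgz : g z.rep ≠ 0 := hg z hz
  have hueq : a • p + b • q
      = δ • ((a * α / δ) • chartLift g x + (b * β / δ) • chartLift g y) := by
    rw [hw₁, hw₂, smul_add, smul_smul, smul_smul, smul_smul, smul_smul]
    have e1 : δ * (a * α / δ) * α⁻¹ = a := by field_simp
    have e2 : δ * (b * β / δ) * β⁻¹ = b := by field_simp
    rw [e1, e2]
  have hwne : (a * α / δ) • chartLift g x + (b * β / δ) • chartLift g y ≠ 0 := by
    intro h
    apply hu
    rw [hueq, h, smul_zero]
  have hmk1 : Projectivization.mk ℝ (a • p + b • q) hu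
      = Projectivization.mk ℝ ((a * α / δ) • chartLift g x + (b * β / δ) • chartLift g y) hwne := by
    rw [Projectivization.mk_eq_mk_iff']
    exact ⟨δ, hueq.symm⟩
  have hmk2 : Projectivization.mk ℝ ((a * α / δ) • chartLift g x + (b * β / δ) • chartLift g y) hwne
      = z := (mk_congr hwz.symm hwne).trans (mk_chartLift g hgz)
  rw [hmk1, hmk2]
  exact hz

lemma lift_convex_transfer {f₀ g : W →L[ℝ] ℝ} {S : Set (Projectivization ℝ W)}
    (hgS : InChart g S) (hgc : Convex ℝ (chartLift g '' S)) (hf₀ : InChart f₀ S) :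
    Convex ℝ (chartLift f₀ '' S) := by
  rintro _ ⟨x, hx, rfl⟩ _ ⟨y, hy, rfl⟩ a b ha hb hab
  have hconn := pc_preconnected hgS hgc
  have hsgn := sign_const hconn f₀ g hf₀ hgS hx hy
  have hp : chartLift f₀ x ≠ 0 := chartLift_ne_zero f₀ (hf₀ x hx)
  have hq : chartLift f₀ y ≠ 0 := chartLift_ne_zero f₀ (hf₀ y hy)
  have hfu : f₀ (a • chartLift f₀ x + b • chartLift f₀ y) = 1 := by
    rw [map_add, map_smul, map_smul, f_chartLift f₀ (hf₀ x hx), f_chartLift f₀ (hf₀ y hy)]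
    simp [hab]
  have hu0 : a • chartLift f₀ x + b • chartLift f₀ y ≠ 0 := by
    intro h
    rw [h, map_zero] at hfu
    exact one_ne_zero hfu.symm
  have hmem := comb_mem hgS hgc hx hy hp hq (mk_chartLift f₀ (hf₀ x hx))
    (mk_chartLift f₀ (hf₀ y hy)) hsgn ha hb hab hu0
  refine ⟨_, hmem, ?_⟩
  rw [chartLift_mk f₀ hu0 (by rw [hfu]; exact one_ne_zero), hfu]
  simp

lemma subset_projHull (X : Set (Projectivization ℝ W)) : X ⊆ projHull X :=
  fun x hx => Set.mem_sInter.2 fun _ hC' => hC'.2 hx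

lemma projHull_subset {X C' : Set (Projectivization ℝ W)} (h1 : IsConvexSet C')
    (h2 : X ⊆ C') : projHull X ⊆ C' :=
  fun _ hx => Set.mem_sInter.1 hx C' ⟨h1, h2⟩

lemma mkim_hull_spec {f₀ : W →L[ℝ] ℝ} {X : Set (Projectivization ℝ W)} (hX : InChart f₀ X) :
    X ⊆ mkim (convexHull ℝ (chartLift f₀ '' X)) ∧
    InChart f₀ (mkim (convexHull ℝ (chartLift f₀ '' X))) ∧
    chartLift f₀ '' (mkim (convexHull ℝ (chartLift f₀ '' X))) = convexHull ℝ (chartLift f₀ '' X) ∧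
    IsConvexSet (mkim (convexHull ℝ (chartLift f₀ '' X))) := by
  have hslice : convexHull ℝ (chartLift f₀ '' X) ⊆ {v : W | f₀ v = 1} :=
    convexHull_min (lift_subset_slice hX) (convex_hyperplane f₀.toLinearMap.isLinear 1)
  have hInChart : InChart f₀ (mkim (convexHull ℝ (chartLift f₀ '' X))) := by
    intro x hx
    obtain ⟨v, h, hvT, rfl⟩ := mem_mkim.1 hx
    rw [f_rep_ne_zero_iff f₀ h, hslice hvT]
    exact one_ne_zero
  have hXsub : X ⊆ mkim (convexHull ℝ (chartLift f₀ '' X)) := by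
    intro x hx
    rw [mem_mkim]
    exact ⟨chartLift f₀ x, chartLift_ne_zero f₀ (hX x hx),
      subset_convexHull ℝ _ ⟨x, hx, rfl⟩, (mk_chartLift f₀ (hX x hx)).symm⟩
  have hlift : chartLift f₀ '' (mkim (convexHull ℝ (chartLift f₀ '' X)))
      = convexHull ℝ (chartLift f₀ '' X) := by
    apply Set.Subset.antisymm
    · rintro _ ⟨x, hx, rfl⟩
      obtain ⟨v, h, hvT, rfl⟩ := mem_mkim.1 hx
      rw [chartLift_mk f₀ h (by rw [hslice hvT]; exact one_ne_zero), hslice hvT]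
      simpa using hvT
    · intro v hv
      have h0 : v ≠ 0 := by
        intro h
        have := hslice hv
        rw [h] at this
        simp at this
      refine ⟨Projectivization.mk ℝ v h0, mem_mkim.2 ⟨v, h0, hv, rfl⟩, ?_⟩
      rw [chartLift_mk f₀ h0 (by rw [hslice hv]; exact one_ne_zero), hslice hv]
      simp
  exact ⟨hXsub, hInChart, hlift, ⟨f₀, hInChart, by rw [hlift]; exact convex_convexHull ℝ _⟩⟩


lemma lift_pair_identity {f₀ g : W →L[ℝ] ℝ} {z : Projectivization ℝ W}
    (hf : f₀ z.rep ≠ 0) (hg : g z.rep ≠ 0) :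
    g (chartLift f₀ z) * f₀ (chartLift g z) = 1 := by
  unfold chartLift
  rw [map_smul, map_smul]
  simp only [smul_eq_mul]
  field_simp

lemma projHull_mem_convex {f₀ : W →L[ℝ] ℝ} {X : Set (Projectivization ℝ W)}
    (hX : InChart f₀ X) (hXconn : IsPreconnected X) {x₀ : Projectivization ℝ W} (hx₀ : x₀ ∈ X)
    {x y : Projectivization ℝ W} (hx : x ∈ projHull X) (hy : y ∈ projHull X)
    (hPIC : InChart f₀ (projHull X))
    {a b : ℝ} (ha : 0 ≤ a) (hb : 0 ≤ b) (hab : a + b = 1)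
    (hu0 : a • chartLift f₀ x + b • chartLift f₀ y ≠ 0) :
    Projectivization.mk ℝ (a • chartLift f₀ x + b • chartLift f₀ y) hu0 ∈ projHull X := by
  apply Set.mem_sInter.2
  rintro C' ⟨⟨g, hg, hgc⟩, hXC'⟩
  have hXg : ∀ z ∈ X, g z.rep ≠ 0 := fun z hz => hg z (hXC' hz)
  set σ := f₀ (chartLift g x₀) with hσd
  have hσ0 : σ ≠ 0 := by
    rw [hσd]
    unfold chartLift
    rw [map_smul, smul_eq_mul]
    exact mul_ne_zero (inv_ne_zero (hXg x₀ hx₀)) (hX x₀ hx₀)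
  set C'' := {z ∈ C' | f₀ z.rep ≠ 0 ∧ 0 < σ * f₀ (chartLift g z)} with hC''d
  have hC''sub : C'' ⊆ C' := fun z hz => hz.1
  have hC''IC : InChart g C'' := fun z hz => hg z hz.1
  have hC''lift : chartLift g '' C'' = chartLift g '' C' ∩ {w : W | 0 < σ * f₀ w} := by
    apply Set.Subset.antisymm
    · rintro _ ⟨z, hz, rfl⟩
      exact ⟨⟨z, hz.1, rfl⟩, hz.2.2⟩
    · rintro w ⟨⟨z, hz, rfl⟩, hw⟩
      refine ⟨z, ⟨hz, ?_, hw⟩, rfl⟩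
      have hf₀w : f₀ (chartLift g z) ≠ 0 := by
        intro h
        rw [Set.mem_setOf_eq, h, mul_zero] at hw
        exact lt_irrefl 0 hw
      have hrep : z.rep = (g z.rep) • chartLift g z := rep_eq_smul_chartLift g (hg z hz)
      rw [hrep, map_smul, smul_eq_mul]
      exact mul_ne_zero (hg z hz) hf₀w
  have hC''conv : Convex ℝ (chartLift g '' C'') := by
    rw [hC''lift]
    apply hgc.inter
    have : {w : W | 0 < σ * f₀ w} = {w : W | 0 < (σ • f₀) w} := by
      ext w
      simp [ContinuousLinearMap.smul_apply, smul_eq_mul]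
    rw [this]
    exact convex_halfSpace_gt (σ • f₀).toLinearMap.isLinear 0
  have hXC'' : X ⊆ C'' := by
    intro z hz
    exact ⟨hXC' hz, hX z hz, sign_const hXconn g f₀ hXg hX hx₀ hz⟩
  have hC''cs : IsConvexSet C'' := ⟨g, hC''IC, hC''conv⟩
  have hxC'' : x ∈ C'' := projHull_subset hC''cs hXC'' hx
  have hyC'' : y ∈ C'' := projHull_subset hC''cs hXC'' hy
  -- signs of g at the f₀-lifts
  have hfx : f₀ x.rep ≠ 0 := hxC''.2.1
  have hfy : f₀ y.rep ≠ 0 := hyC''.2.1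
  have hgx : g x.rep ≠ 0 := hg x hxC''.1
  have hgy : g y.rep ≠ 0 := hg y hyC''.1
  set Fx := f₀ (chartLift g x) with hFxd
  set Fy := f₀ (chartLift g y) with hFyd
  have hex : g (chartLift f₀ x) * Fx = 1 := lift_pair_identity hfx hgx
  have hey : g (chartLift f₀ y) * Fy = 1 := lift_pair_identity hfy hgy
  have hA : 0 < σ * Fx := hxC''.2.2
  have hB : 0 < σ * Fy := hyC''.2.2
  have hFF : 0 < Fx * Fy := by
    have hσ2 : 0 < σ * σ := mul_self_pos.2 hσ0
    nlinarith
  have hsgn : 0 < g (chartLift f₀ x) * g (chartLift f₀ y) := by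
    have h1 : (g (chartLift f₀ x) * g (chartLift f₀ y)) * (Fx * Fy) = 1 := by
      rw [show (g (chartLift f₀ x) * g (chartLift f₀ y)) * (Fx * Fy)
        = (g (chartLift f₀ x) * Fx) * (g (chartLift f₀ y) * Fy) from by ring, hex, hey, one_mul]
    have h2 : g (chartLift f₀ x) * g (chartLift f₀ y) = (Fx * Fy)⁻¹ :=
      eq_inv_of_mul_eq_one_left h1
    rw [h2]
    exact inv_pos.2 hFF
  exact comb_mem hg hgc hxC''.1 hyC''.1 (chartLift_ne_zero f₀ hfx) (chartLift_ne_zero f₀ hfy)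
    (mk_chartLift f₀ hfx) (mk_chartLift f₀ hfy) hsgn ha hb hab hu0

lemma projHull_properlyConvex {f₀ : W →L[ℝ] ℝ} {X : Set (Projectivization ℝ W)}
    (hX : InChart f₀ X) (hXconn : IsPreconnected X) {x₀ : Projectivization ℝ W} (hx₀ : x₀ ∈ X)
    (hXb : Bornology.IsBounded (chartLift f₀ '' X)) :
    IsProperlyConvex (projHull X) := by
  obtain ⟨hXsub, hIC, hlift, hcs⟩ := mkim_hull_spec hX
  have hPsub : projHull X ⊆ mkim (convexHull ℝ (chartLift f₀ '' X)) := projHull_subset hcs hXsub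
  have hPIC : InChart f₀ (projHull X) := fun x hx => hIC x (hPsub hx)
  have hliftsub : chartLift f₀ '' projHull X ⊆ convexHull ℝ (chartLift f₀ '' X) := by
    rw [← hlift]
    exact Set.image_mono hPsub
  refine ⟨f₀, hPIC, ?_, ?_⟩
  · rintro _ ⟨x, hx, rfl⟩ _ ⟨y, hy, rfl⟩ a b ha hb hab
    have hfu : f₀ (a • chartLift f₀ x + b • chartLift f₀ y) = 1 := by
      rw [map_add, map_smul, map_smul, f_chartLift f₀ (hPIC x hx), f_chartLift f₀ (hPIC y hy)]
      simp [hab]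
    have hu0 : a • chartLift f₀ x + b • chartLift f₀ y ≠ 0 := by
      intro h
      rw [h, map_zero] at hfu
      exact one_ne_zero hfu.symm
    have hmem := projHull_mem_convex hX hXconn hx₀ hx hy hPIC ha hb hab hu0
    refine ⟨_, hmem, ?_⟩
    rw [chartLift_mk f₀ hu0 (by rw [hfu]; exact one_ne_zero), hfu]
    simp
  · exact (isBounded_convexHull.2 hXb).subset hliftsub


lemma sign_contra {PX PY a b : ℝ} (hs : 0 < PX * PY) (ha : 0 ≤ a) (hb : 0 ≤ b)
    (hab : a + b = 1) (heq : a * PX + b * PY = 0) : False := by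
  have hPX0 : PX ≠ 0 := fun h => by rw [h, zero_mul] at hs; exact lt_irrefl 0 hs
  have hPY0 : PY ≠ 0 := fun h => by rw [h, mul_zero] at hs; exact lt_irrefl 0 hs
  rcases lt_or_gt_of_ne hPX0 with h | h
  · have hY : PY < 0 := by nlinarith
    have h1 : a * PX ≤ 0 := mul_nonpos_iff.2 (Or.inl ⟨ha, le_of_lt h⟩)
    have h2 : b * PY ≤ 0 := mul_nonpos_iff.2 (Or.inl ⟨hb, le_of_lt hY⟩)
    have h3 : a * PX = 0 := by linarith
    have h4 : b * PY = 0 := by linarith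
    have ha0 : a = 0 := by
      rcases mul_eq_zero.1 h3 with h' | h'
      · exact h'
      · exact absurd h' hPX0
    have hb0 : b = 0 := by
      rcases mul_eq_zero.1 h4 with h' | h'
      · exact h'
      · exact absurd h' hPY0
    rw [ha0, hb0] at hab
    norm_num at hab
  · have hY : 0 < PY := by nlinarith
    have h1 : 0 ≤ a * PX := mul_nonneg ha (le_of_lt h)
    have h2 : 0 ≤ b * PY := mul_nonneg hb (le_of_lt hY)
    have h3 : a * PX = 0 := by linarith
    have h4 : b * PY = 0 := by linarith
    have ha0 : a = 0 := by
      rcases mul_eq_zero.1 h3 with h' | h'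
      · exact h'
      · exact absurd h' hPX0
    have hb0 : b = 0 := by
      rcases mul_eq_zero.1 h4 with h' | h'
      · exact h'
      · exact absurd h' hPY0
    rw [ha0, hb0] at hab
    norm_num at hab

end AuxTop

/-- **Valence Three Lemma** (Lemma 2.6 of Danciger–Guéritaud–Kassel). -/
theorem valence_three_lemma
    (V : Type) [NormedAddCommGroup V] [NormedSpace ℝ V] [FiniteDimensional ℝ V]
    (hdim : 3 ≤ Module.finrank ℝ V)
    (A B C D : Set (Projectivization ℝ V))
    (hAo : IsOpen A) (hBo : IsOpen B) (hCo : IsOpen C) (hDo : IsOpen D)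
    (hApc : IsProperlyConvex A) (hBpc : IsProperlyConvex B)
    (hCpc : IsProperlyConvex C) (hDpc : IsProperlyConvex D)
    (hABC : IsOccultation A B C) (hABD : IsOccultation A B D)
    (hCBD : IsOccultation C B D) :
    -- (1) `Conv(A ∪ B ∪ C ∪ D)` is well defined and properly convex:
    IsProperlyConvex (projHull (A ∪ B ∪ C ∪ D)) ∧
    -- (2) `(A, Conv(B ∪ C), D)` is in occultation position:
    IsOccultation A (projHull (B ∪ C)) D := by
  classical
  obtain ⟨fA, hAc, hAconv, hAb⟩ := hApc
  obtain ⟨fB, hBc, hBconv, hBb⟩ := hBpc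
  obtain ⟨fC, hCc, hCconv, hCb⟩ := hCpc
  obtain ⟨fD, hDc, hDconv, hDb⟩ := hDpc
  obtain ⟨⟨hnAB, hnCB⟩, ⟨hABne, hBCne, hAC⟩, hdABC⟩ := hABC
  obtain ⟨⟨hnAB', hnDB⟩, ⟨hABne', hBDne, hAD⟩, hdABD⟩ := hABD
  obtain ⟨⟨hnCB', hnDB'⟩, ⟨hCBne, hBDne', hCD⟩, hdCBD⟩ := hCBD
  obtain ⟨p, hpA, hpB⟩ := hABne
  obtain ⟨q, hqB, hqC⟩ := hBCne
  obtain ⟨r, hrB, hrD⟩ := hBDne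
  have hAne : A.Nonempty := ⟨p, hpA⟩
  have hBne : B.Nonempty := ⟨p, hpB⟩
  have hCne : C.Nonempty := ⟨q, hqC⟩
  have hDne : D.Nonempty := ⟨r, hrD⟩
  have hoff : ∀ (E : Set (Projectivization ℝ V)), IsOpen E → ¬ E ⊆ B →
      ∃ e ∈ E, e ∉ closure B := by
    intro E hEo hEB
    by_contra h
    push_neg at h
    exact hEB (open_subset_of_subset_closure hBc hBconv hBb hBo hBne hEo
      (fun x hx => h x hx))
  obtain ⟨a₁, ha₁E, ha₁B⟩ := hoff A hAo hnAB
  obtain ⟨c₁, hc₁E, hc₁B⟩ := hoff C hCo hnCB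
  obtain ⟨d₁, hd₁E, hd₁B⟩ := hoff D hDo hnDB
  have hsep : ∀ (x : Projectivization ℝ V), x ∉ closure B →
      ∃ φ ∈ dualSet B, φ.rep x.rep = 0 := fun x hx =>
    separating_hyperplane hBc hBconv hBb hBne hx
  have notdual : ∀ (E : Set (Projectivization ℝ V)) (x : Projectivization ℝ V)
      (φ : Projectivization ℝ (V →L[ℝ] ℝ)), x ∈ E → φ.rep x.rep = 0 → φ ∉ dualSet E := by
    intro E x φ hx h0 hφ
    exact (mem_dualSet.1 hφ x (subset_closure hx)) h0
  obtain ⟨φ₁, hφ₁B, hφ₁a⟩ := hsep a₁ ha₁B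
  have hφ₁nA : φ₁ ∉ dualSet A := notdual A a₁ φ₁ ha₁E hφ₁a
  have hφ₁C : φ₁ ∈ dualSet C := (hdABC (subset_closure hφ₁B)).resolve_left hφ₁nA
  have hφ₁D : φ₁ ∈ dualSet D := (hdABD (subset_closure hφ₁B)).resolve_left hφ₁nA
  obtain ⟨φ₂, hφ₂B, hφ₂c⟩ := hsep c₁ hc₁B
  have hφ₂nC : φ₂ ∉ dualSet C := notdual C c₁ φ₂ hc₁E hφ₂c
  obtain ⟨φ₃, hφ₃B, hφ₃d⟩ := hsep d₁ hd₁B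
  have hφ₃nD : φ₃ ∉ dualSet D := notdual D d₁ φ₃ hd₁E hφ₃d
  have hφ₃A : φ₃ ∈ dualSet A := (hdABD (subset_closure hφ₃B)).resolve_right hφ₃nD
  have hφ₃C : φ₃ ∈ dualSet C := (hdCBD (subset_closure hφ₃B)).resolve_right hφ₃nD
  have hBpre : IsPreconnected (dualSet B) := dualSet_preconnected hBc hBconv hBb hBne
  have hcover : dualSet B ⊆ (dualSet A ∩ dualSet C) ∪
      ((dualSet A ∩ dualSet D) ∪ (dualSet C ∩ dualSet D)) := by
    intro φ hφ
    have h₁ := hdABC (subset_closure hφ)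
    have h₂ := hdABD (subset_closure hφ)
    have h₃ := hdCBD (subset_closure hφ)
    rcases h₁ with h₁ | h₁ <;> rcases h₂ with h₂ | h₂ <;> rcases h₃ with h₃ | h₃ <;>
      first
        | exact Or.inl ⟨‹_›, ‹_›⟩
        | exact Or.inr (Or.inl ⟨‹_›, ‹_›⟩)
        | exact Or.inr (Or.inr ⟨‹_›, ‹_›⟩)
  obtain ⟨φ₀, hφ₀B, hφ₀uv⟩ := hBpre (dualSet A ∩ dualSet C)
      ((dualSet A ∩ dualSet D) ∪ (dualSet C ∩ dualSet D))
      ((isOpen_dualSet A).inter (isOpen_dualSet C))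
      (((isOpen_dualSet A).inter (isOpen_dualSet D)).union
        ((isOpen_dualSet C).inter (isOpen_dualSet D)))
      hcover ⟨φ₃, hφ₃B, hφ₃A, hφ₃C⟩ ⟨φ₁, hφ₁B, Or.inr ⟨hφ₁C, hφ₁D⟩⟩
  have hφ₀A : φ₀ ∈ dualSet A := hφ₀uv.1.1
  have hφ₀C : φ₀ ∈ dualSet C := hφ₀uv.1.2
  have hφ₀D : φ₀ ∈ dualSet D := by
    rcases hφ₀uv.2 with h | h
    · exact h.2
    · exact h.2
  set f₀ := φ₀.rep with hf₀d
  have chA : ∀ x ∈ closure A, f₀ x.rep ≠ 0 := mem_dualSet.1 hφ₀A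
  have chB : ∀ x ∈ closure B, f₀ x.rep ≠ 0 := mem_dualSet.1 hφ₀B
  have chC : ∀ x ∈ closure C, f₀ x.rep ≠ 0 := mem_dualSet.1 hφ₀C
  have chD : ∀ x ∈ closure D, f₀ x.rep ≠ 0 := mem_dualSet.1 hφ₀D
  have icA : InChart f₀ A := fun x hx => chA x (subset_closure hx)
  have icB : InChart f₀ B := fun x hx => chB x (subset_closure hx)
  have icC : InChart f₀ C := fun x hx => chC x (subset_closure hx)
  have icD : InChart f₀ D := fun x hx => chD x (subset_closure hx)
  have bdd : ∀ (S : Set (Projectivization ℝ V)) (fS : V →L[ℝ] ℝ), InChart fS S →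
      Convex ℝ (chartLift fS '' S) → Bornology.IsBounded (chartLift fS '' S) →
      (∀ x ∈ closure S, f₀ x.rep ≠ 0) → Bornology.IsBounded (chartLift f₀ '' S) := by
    intro S fS h1 h2 h3 h4
    have hclcp : IsCompact (closure S) := by
      rw [closure_pc h1 h3]
      exact isCompact_mkim (isCompact_closure_lift h1 h3) (zero_not_mem_closure_lift h1)
    have himg : IsCompact (chartLift f₀ '' closure S) :=
      hclcp.image_of_continuousOn ((continuousOn_chartLift f₀).mono h4)
    exact himg.isBounded.subset (Set.image_mono subset_closure)
  have hX4IC : InChart f₀ (A ∪ B ∪ C ∪ D) := by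
    rintro x (((hx|hx)|hx)|hx)
    exacts [icA x hx, icB x hx, icC x hx, icD x hx]
  have preA : IsPreconnected A := pc_preconnected hAc hAconv
  have preB : IsPreconnected B := pc_preconnected hBc hBconv
  have preC : IsPreconnected C := pc_preconnected hCc hCconv
  have preD : IsPreconnected D := pc_preconnected hDc hDconv
  have preAB : IsPreconnected (A ∪ B) := IsPreconnected.union p hpA hpB preA preB
  have preABC : IsPreconnected (A ∪ B ∪ C) :=
    IsPreconnected.union q (Or.inr hqB) hqC preAB preC
  have preX4 : IsPreconnected (A ∪ B ∪ C ∪ D) :=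
    IsPreconnected.union r (Or.inl (Or.inr hrB)) hrD preABC preD
  have hX4b : Bornology.IsBounded (chartLift f₀ '' (A ∪ B ∪ C ∪ D)) := by
    rw [Set.image_union, Set.image_union, Set.image_union]
    exact (((bdd A fA hAc hAconv hAb chA).union (bdd B fB hBc hBconv hBb chB)).union
      (bdd C fC hCc hCconv hCb chC)).union (bdd D fD hDc hDconv hDb chD)
  have part1 : IsProperlyConvex (projHull (A ∪ B ∪ C ∪ D)) :=
    projHull_properlyConvex hX4IC preX4 (Or.inl (Or.inl (Or.inl hpA))) hX4b
  -- part 2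
  have hBP : B ⊆ projHull (B ∪ C) := fun x hx => subset_projHull _ (Or.inl hx)
  have hBCIC : InChart f₀ (B ∪ C) := by
    rintro x (hx|hx)
    exacts [icB x hx, icC x hx]
  have preBC : IsPreconnected (B ∪ C) := IsPreconnected.union q hqB hqC preB preC
  have hclBC : closure (B ∪ C) = closure B ∪ closure C := closure_union
  have chBC : ∀ x ∈ closure (B ∪ C), f₀ x.rep ≠ 0 := by
    intro x hx
    rw [hclBC] at hx
    rcases hx with hx | hx
    exacts [chB x hx, chC x hx]
  have main_noninc : ∀ (E : Set (Projectivization ℝ V)), IsOpen E → ¬ E ⊆ B → E ∩ C = ∅ →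
      (∀ φ, φ ∈ dualSet B → φ ∉ dualSet E → φ ∈ dualSet C) → ¬ E ⊆ projHull (B ∪ C) := by
    intro E hEo hEnotB hEC htri hEP
    obtain ⟨hXsub, hICm, hliftm, hcsm⟩ := mkim_hull_spec hBCIC
    obtain ⟨e₀, he₀E, he₀B⟩ := hoff E hEo hEnotB
    have hO₁o : IsOpen (E \ closure B) := hEo.sdiff isClosed_closure
    have h2 : ¬ (E \ closure B) ⊆ closure C := by
      intro h
      have hsub := open_subset_of_subset_closure hCc hCconv hCb hCo hCne hO₁o h
      have : e₀ ∈ E ∩ C := ⟨he₀E, hsub ⟨he₀E, he₀B⟩⟩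
      rw [hEC] at this
      exact this
    obtain ⟨e, he₁, heC⟩ := Set.not_subset.1 h2
    have heE : e ∈ E := he₁.1
    have heB : e ∉ closure B := he₁.2
    have heW := projHull_subset hcsm hXsub (hEP heE)
    have helift : chartLift f₀ e ∈ convexHull ℝ (chartLift f₀ '' (B ∪ C)) := by
      rw [← hliftm]
      exact ⟨e, heW, rfl⟩
    have hBlift : Convex ℝ (chartLift f₀ '' B) :=
      lift_convex_transfer hBc hBconv (fun x hx => icB x hx)
    have hClift : Convex ℝ (chartLift f₀ '' C) :=
      lift_convex_transfer hCc hCconv (fun x hx => icC x hx)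
    rw [Set.image_union, Convex.convexHull_union hBlift hClift
      (hBne.image _) (hCne.image _), mem_convexJoin] at helift
    obtain ⟨pp, hpp, qq, hqq, hseg⟩ := helift
    obtain ⟨bb, hbb, rfl⟩ := hpp
    obtain ⟨cc, hcc, rfl⟩ := hqq
    obtain ⟨a, b, ha, hb, hab, habe⟩ := hseg
    obtain ⟨φ, hφB, hφe⟩ := hsep e heB
    have hφE : φ ∉ dualSet E := notdual E e φ heE hφe
    have hφC : φ ∈ dualSet C := htri φ hφB hφE
    have hφrep : ∀ x ∈ closure (B ∪ C), φ.rep x.rep ≠ 0 := by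
      intro x hx
      rw [hclBC] at hx
      rcases hx with hx | hx
      · exact mem_dualSet.1 hφB x hx
      · exact mem_dualSet.1 hφC x hx
    have hsgn := sign_const preBC.closure f₀ φ.rep chBC hφrep
      (subset_closure (Or.inl hbb)) (subset_closure (Or.inr hcc))
    have h0 : φ.rep (chartLift f₀ e) = 0 := by
      unfold chartLift
      rw [map_smul, smul_eq_mul, hφe, mul_zero]
    have heq : a * φ.rep (chartLift f₀ bb) + b * φ.rep (chartLift f₀ cc) = 0 := by
      have hmap := congrArg φ.rep habe
      rw [map_add, map_smul, map_smul, smul_eq_mul, smul_eq_mul, h0] at hmap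
      exact hmap
    exact sign_contra hsgn ha hb hab heq
  have hnotAP : ¬ A ⊆ projHull (B ∪ C) := main_noninc A hAo hnAB hAC
    (fun φ hφ hnφ => (hdABC (subset_closure hφ)).resolve_left hnφ)
  have hnotDP : ¬ D ⊆ projHull (B ∪ C) := main_noninc D hDo hnDB
    (by rw [Set.inter_comm]; exact hCD)
    (fun φ hφ hnφ => (hdCBD (subset_closure hφ)).resolve_right hnφ)
  have hPB : dualSet (projHull (B ∪ C)) ⊆ dualSet B := by
    intro φ hφ
    rw [mem_dualSet] at hφ ⊢
    intro x hx
    exact hφ x (closure_mono hBP hx)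
  refine ⟨part1, ⟨hnotAP, hnotDP⟩, ⟨⟨p, hpA, hBP hpB⟩, ⟨r, hBP hrB, hrD⟩, hAD⟩, ?_⟩
  exact fun φ hφ => hdABD (closure_mono hPB hφ)

end ProjectiveCombination
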